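/- Fix an integer k ≥ 0 and let M† encode the inverse k-GM tree MT†(k). Then: (1) for every binary word w, M†(w) is a k-GM triple (a,b,c) with b ≤ max{a,c}; and (2) for every k-GM triple (a,b,c) with b ≤ max{a,c} there is exactly one binary word w with M†(w) = (a,b,c); in particular M† is injective. -/
import Mathlib


/-- A `k`-generalized Markov triple: positive integers satisfying the `k`-GM equation. -/
def IsGMTriple (k a b c : ℤ) : Prop :=
  0 < a ∧ 0 < b ∧ 0 < c ∧
    a ^ 2 + b ^ 2 + c ^ 2 + k * (b * c + c * a + a * b) = (3 + 3 * k) * a * b * c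

/-- One generation step of the inverse `k`-GM tree `MT†(k)`. -/
def gmDagStep (k : ℤ) (t : ℤ × ℤ × ℤ) (d : Bool) : ℤ × ℤ × ℤ :=
  match t, d with
  | (a, b, c), false => (a, c, (3 + 3 * k) * a * c - b - k * c - k * a)
  | (a, b, c), true  => ((3 + 3 * k) * a * c - b - k * c - k * a, a, c)

/-- The inverse `k`-GM tree `MT†(k)`, encoded on binary words. -/
def MdagTree (k : ℤ) (w : List Bool) : ℤ × ℤ × ℤ :=
  w.foldl (gmDagStep k) (1, 1, 1)

namespace GMaux

lemma step_false (k : ℤ) (t : ℤ × ℤ × ℤ) :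
    gmDagStep k t false = (t.1, t.2.2, (3+3*k)*t.1*t.2.2 - t.2.1 - k*t.2.2 - k*t.1) := rfl

lemma step_true (k : ℤ) (t : ℤ × ℤ × ℤ) :
    gmDagStep k t true = ((3+3*k)*t.1*t.2.2 - t.2.1 - k*t.2.2 - k*t.1, t.1, t.2.2) := rfl

lemma mdag_concat (k : ℤ) (w : List Bool) (d : Bool) :
    MdagTree k (w ++ [d]) = gmDagStep k (MdagTree k w) d := by
  simp [MdagTree, List.foldl_append]

lemma N_big (k a b c : ℤ) (hk : 0 ≤ k) (ha : 0 < a) (hb : 0 < b) (hc : 0 < c)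
    (heq : a ^ 2 + b ^ 2 + c ^ 2 + k * (b * c + c * a + a * b) = (3 + 3 * k) * a * b * c)
    (hm : b ≤ max a c) :
    max a c < (3+3*k)*a*c - b - k*c - k*a := by
  have hNb : ((3+3*k)*a*c - b - k*c - k*a) * b = a^2 + c^2 + k*a*c := by
    linear_combination -heq
  rcases le_total c a with h | h
  · rw [max_eq_left h] at hm ⊢
    by_contra hcon
    push_neg at hcon
    have h1 : ((3+3*k)*a*c - b - k*c - k*a) * b ≤ a * b :=
      mul_le_mul_of_nonneg_right hcon hb.le
    have h2 : a * b ≤ a * a := mul_le_mul_of_nonneg_left hm ha.le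
    nlinarith [mul_pos hc hc, mul_nonneg hk (mul_pos ha hc).le]
  · rw [max_eq_right h] at hm ⊢
    by_contra hcon
    push_neg at hcon
    have h1 : ((3+3*k)*a*c - b - k*c - k*a) * b ≤ c * b :=
      mul_le_mul_of_nonneg_right hcon hb.le
    have h2 : c * b ≤ c * c := mul_le_mul_of_nonneg_left hm hc.le
    nlinarith [mul_pos ha ha, mul_nonneg hk (mul_pos ha hc).le]

def Inv (k : ℤ) (t : ℤ × ℤ × ℤ) : Prop :=
  IsGMTriple k t.1 t.2.1 t.2.2 ∧ t.2.1 ≤ max t.1 t.2.2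

lemma inv_step (k : ℤ) (hk : 0 ≤ k) (t : ℤ × ℤ × ℤ) (h : Inv k t) (d : Bool) :
    Inv k (gmDagStep k t d) := by
  obtain ⟨a, b, c⟩ := t
  obtain ⟨⟨ha, hb, hc, heq⟩, hm⟩ := h
  simp only [Inv] at *
  have hN := N_big k a b c hk ha hb hc heq hm
  have hNpos : 0 < (3+3*k)*a*c - b - k*c - k*a :=
    lt_trans (lt_of_lt_of_le ha (le_max_left a c)) hN
  have heq' : a ^ 2 + c ^ 2 + ((3+3*k)*a*c - b - k*c - k*a) ^ 2 +
      k * (c * ((3+3*k)*a*c - b - k*c - k*a) + ((3+3*k)*a*c - b - k*c - k*a) * a + a * c)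
      = (3 + 3 * k) * a * c * ((3+3*k)*a*c - b - k*c - k*a) := by
    linear_combination heq
  have mk : ∀ x y z : ℤ, IsGMTriple k x y z → y ≤ max x z → Inv k (x, y, z) :=
    fun _ _ _ h1 h2 => ⟨h1, h2⟩
  cases d
  · exact mk _ _ _ ⟨ha, hc, hNpos, heq'⟩
      (le_max_of_le_right (le_of_lt (lt_of_le_of_lt (le_max_right a c) hN)))
  · exact mk _ _ _ ⟨hNpos, ha, hc, by linear_combination heq'⟩
      (le_max_of_le_left (le_of_lt (lt_of_le_of_lt (le_max_left a c) hN)))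

lemma inv_mdag (k : ℤ) (hk : 0 ≤ k) (w : List Bool) : Inv k (MdagTree k w) := by
  have base : Inv k ((1:ℤ), (1:ℤ), (1:ℤ)) := by
    refine ⟨⟨one_pos, one_pos, one_pos, by ring⟩, by simp⟩
  rw [MdagTree]
  generalize hgen : ((1:ℤ), (1:ℤ), (1:ℤ)) = t at base ⊢
  clear hgen
  induction w generalizing t with
  | nil => exact base
  | cons d w ih => exact ih _ (inv_step k hk t base d)

lemma eq_nil_of_one (k : ℤ) (hk : 0 ≤ k) (w : List Bool)
    (h : MdagTree k w = (1, 1, 1)) : w = [] := by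
  rcases List.eq_nil_or_concat w with rfl | ⟨w', d, rfl⟩
  · rfl
  exfalso
  rw [List.concat_eq_append, mdag_concat] at h
  obtain ⟨⟨hp, hq, hr, hpe⟩, hpm⟩ := inv_mdag k hk w'
  have hN := N_big k _ _ _ hk hp hq hr hpe hpm
  have h1 : (1:ℤ) ≤ max (MdagTree k w').1 (MdagTree k w').2.2 :=
    le_max_of_le_left hp
  cases d
  · rw [step_false] at h
    have := congrArg (fun t => t.2.2) h
    simp at this
    omega
  · rw [step_true] at h
    have := congrArg (fun t => t.1) h
    simp at this
    omega

lemma flip_le (k x y z z' : ℤ) (hk : 0 ≤ k) (hx : 0 < x) (hy : 0 < y)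
    (hzx : x < z) (hzy : y < z)
    (hP : z' * z = x^2 + y^2 + k*x*y)
    (hS : z' + z = (3+3*k)*x*y - k*x - k*y) :
    z' ≤ max x y := by
  by_contra hcon
  push_neg at hcon
  have hexp : (z' - max x y) * (z - max x y)
      = x^2 + y^2 + k*x*y - (max x y) * ((3+3*k)*x*y - k*x - k*y) + (max x y)^2 := by
    linear_combination hP - (max x y) * hS
  rcases le_total x y with hxy | hxy
  · rw [max_eq_right hxy] at hcon hexp
    have hprod : 0 < (z' - y) * (z - y) :=
      mul_pos (by linarith) (by linarith)
    have t1 : 0 ≤ (x - 1) * y^2 := mul_nonneg (by linarith) (sq_nonneg y)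
    have t2 : 0 ≤ x * (y^2 - x) := mul_nonneg hx.le (by nlinarith)
    have t3 : 0 ≤ k * ((x - 1) * y^2) := mul_nonneg hk t1
    have t4 : 0 ≤ k * (x * y * (y - 1)) :=
      mul_nonneg hk (mul_nonneg (mul_nonneg hx.le hy.le) (by linarith))
    nlinarith [hprod, hexp, t1, t2, t3, t4]
  · rw [max_eq_left hxy] at hcon hexp
    have hprod : 0 < (z' - x) * (z - x) :=
      mul_pos (by linarith) (by linarith)
    have t1 : 0 ≤ (y - 1) * x^2 := mul_nonneg (by linarith) (sq_nonneg x)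
    have t2 : 0 ≤ y * (x^2 - y) := mul_nonneg hy.le (by nlinarith)
    have t3 : 0 ≤ k * ((y - 1) * x^2) := mul_nonneg hk t1
    have t4 : 0 ≤ k * (x * y * (x - 1)) :=
      mul_nonneg hk (mul_nonneg (mul_nonneg hx.le hy.le) (by linarith))
    nlinarith [hprod, hexp, t1, t2, t3, t4]

-- no triple with b = c > a
lemma ne_of_lt_right (k a b c : ℤ) (hk : 0 ≤ k) (ha : 0 < a) (hb : 0 < b) (hc : 0 < c)
    (heq : a ^ 2 + b ^ 2 + c ^ 2 + k * (b * c + c * a + a * b) = (3 + 3 * k) * a * b * c)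
    (hac : a < c) : b ≠ c := by
  rintro rfl
  have hca : a + 1 ≤ b := hac
  have hc2 : a < b^2 := by nlinarith
  have t2 : 0 < a * (b^2 - a) := mul_pos ha (by linarith)
  have t1 : 0 ≤ (a - 1) * b^2 := mul_nonneg (by linarith) (sq_nonneg b)
  have t3 : 0 ≤ k * ((a - 1) * b^2) := mul_nonneg hk t1
  have t4 : 0 ≤ k * (a * b * (b - 1)) :=
    mul_nonneg hk (mul_nonneg (mul_pos ha hb).le (by linarith))
  nlinarith [heq, t1, t2, t3, t4]

lemma ne_of_lt_left (k a b c : ℤ) (hk : 0 ≤ k) (ha : 0 < a) (hb : 0 < b) (hc : 0 < c)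
    (heq : a ^ 2 + b ^ 2 + c ^ 2 + k * (b * c + c * a + a * b) = (3 + 3 * k) * a * b * c)
    (hca : c < a) : b ≠ a := by
  intro h
  exact ne_of_lt_right k c b a hk hc hb ha (by linear_combination heq) hca h

-- no triple with a = c other than (1,1,1), given b ≤ a
lemma no_balanced (k a b : ℤ) (hk : 0 ≤ k) (ha : 0 < a) (hb : 0 < b)
    (heq : a ^ 2 + b ^ 2 + a ^ 2 + k * (b * a + a * a + a * b) = (3 + 3 * k) * a * b * a)
    (hba : b ≤ a) (ha1 : a ≠ 1) : False := by
  have ha2 : 2 ≤ a := by omega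
  rcases eq_or_lt_of_le hba with rfl | hba'
  · -- b = a
    nlinarith [mul_pos ha ha, mul_nonneg hk (mul_pos ha ha).le,
      mul_nonneg (mul_nonneg hk ha.le) (mul_pos ha ha).le]
  · have hb1 : 1 ≤ b := hb
    have hble : b ≤ a - 1 := by omega
    have hg1 : 0 < (a-1)*(a+1) + 2*k*a*(a-1) := by
      have h0 : 0 ≤ 2*k*a*(a-1) :=
        mul_nonneg (mul_nonneg (by linarith) ha.le) (by omega)
      nlinarith
    have hg2 : 0 < (3+3*k)*a^3 - (6+6*k)*a^2 + 2*k*a + 2*a - 1 := by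
      nlinarith [mul_nonneg (mul_nonneg hk ha.le) (mul_nonneg ha.le ha.le),
        mul_nonneg hk ha.le, sq_nonneg a, mul_pos ha ha]
    have hid : (a-1-b)*((a-1)*(a+1) + 2*k*a*(a-1))
        + (b-1)*((3+3*k)*a^3 - (6+6*k)*a^2 + 2*k*a + 2*a - 1)
        + (a-2)*((b-1)*(a-1-b)) = 0 := by
      linear_combination (2 - a) * heq
    have hT1 : 0 ≤ (a-1-b)*((a-1)*(a+1) + 2*k*a*(a-1)) :=
      mul_nonneg (by omega) hg1.le
    have hT2 : 0 ≤ (b-1)*((3+3*k)*a^3 - (6+6*k)*a^2 + 2*k*a + 2*a - 1) :=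
      mul_nonneg (by omega) hg2.le
    have hT3 : 0 ≤ (a-2)*((b-1)*(a-1-b)) :=
      mul_nonneg (by omega) (mul_nonneg (by omega) (by omega))
    have e1 : (a-1-b)*((a-1)*(a+1) + 2*k*a*(a-1)) = 0 := by linarith
    have e2 : (b-1)*((3+3*k)*a^3 - (6+6*k)*a^2 + 2*k*a + 2*a - 1) = 0 := by linarith
    have ea : a - 1 - b = 0 := by
      rcases mul_eq_zero.mp e1 with h | h
      · exact h
      · exact absurd h hg1.ne'
    have eb : b - 1 = 0 := by
      rcases mul_eq_zero.mp e2 with h | h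
      · exact h
      · exact absurd h hg2.ne'
    have ha' : a = 2 := by omega
    have hb' : b = 1 := by omega
    subst ha' hb'
    norm_num at heq
    omega

lemma key (k : ℤ) (hk : 0 ≤ k) :
    ∀ (n : ℕ) (a b c : ℤ), IsGMTriple k a b c → b ≤ max a c → a + b + c ≤ (n : ℤ) →
      ∃! w : List Bool, MdagTree k w = (a, b, c) := by
  intro n
  induction n with
  | zero =>
    intro a b c h hm hle
    obtain ⟨ha, hb, hc, -⟩ := h
    norm_num at hle
    linarith
  | succ n ih =>
    intro a b c h hm hle
    obtain ⟨ha, hb, hc, heq⟩ := h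
    push_cast at hle
    rcases lt_trichotomy a c with hac | hac | hac
    · -- a < c : last move was `false`
      rw [max_eq_right hac.le] at hm
      have hbc : b < c :=
        lt_of_le_of_ne hm (ne_of_lt_right k a b c hk ha hb hc heq hac)
      set b' : ℤ := (3+3*k)*a*b - k*a - k*b - c with hb'def
      have hPb : b' * c = a^2 + b^2 + k*a*b := by
        rw [hb'def]; linear_combination -heq
      have hb'pos : 0 < b' := by
        nlinarith [hPb, mul_pos ha hb, sq_nonneg a, sq_nonneg b,
          mul_nonneg hk (mul_pos ha hb).le]
      have hSb : b' + c = (3+3*k)*a*b - k*a - k*b := by rw [hb'def]; ring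
      have hb'le : b' ≤ max a b := flip_le k a b c b' hk ha hb hac hbc hPb hSb
      have hb'c : b' < c := lt_of_le_of_lt hb'le (max_lt hac hbc)
      have hparent : IsGMTriple k a b' b :=
        ⟨ha, hb'pos, hb, by rw [hb'def]; linear_combination heq⟩
      obtain ⟨w', hw', huniq⟩ := ih a b' b hparent hb'le (by linarith)
      have hstep : gmDagStep k (a, b', b) false = (a, b, c) := by
        have h3 : (3+3*k)*a*b - b' - k*b - k*a = c := by rw [hb'def]; ring
        simp only [gmDagStep, h3]
      refine ⟨w' ++ [false], show MdagTree k (w' ++ [false]) = (a,b,c) by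
        rw [mdag_concat, hw', hstep], ?_⟩
      intro v hv
      rcases List.eq_nil_or_concat v with rfl | ⟨v', d, rfl⟩
      · exfalso
        simp only [MdagTree, List.foldl_nil, Prod.mk.injEq] at hv
        omega
      rw [List.concat_eq_append, mdag_concat] at hv
      have hinv := inv_mdag k hk v'
      rcases htv : MdagTree k v' with ⟨p, q, r⟩
      rw [htv] at hinv hv
      obtain ⟨⟨hp, hq, hr, hpe⟩, hpm⟩ := hinv
      have hN := N_big k p q r hk hp hq hr hpe hpm
      cases d
      · simp only [gmDagStep, Prod.mk.injEq] at hv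
        obtain ⟨h1, h2, h3⟩ := hv
        subst h1 h2
        have hq' : q = b' := by rw [hb'def]; linarith
        rw [hq'] at htv
        rw [List.concat_eq_append, huniq v' htv]
      · exfalso
        simp only [gmDagStep, Prod.mk.injEq] at hv
        obtain ⟨h1, h2, h3⟩ := hv
        have : r ≤ max p r := le_max_right p r
        omega
    · -- a = c
      subst hac
      simp only [max_self] at hm
      by_cases h1 : a = 1
      · subst h1
        have hb1 : b = 1 := le_antisymm hm hb
        subst hb1
        exact ⟨[], rfl, fun v hv => eq_nil_of_one k hk v hv⟩
      · exact (no_balanced k a b hk ha hb heq hm h1).elim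
    · -- c < a : last move was `true`
      rw [max_eq_left hac.le] at hm
      have hba : b < a :=
        lt_of_le_of_ne hm (ne_of_lt_left k a b c hk ha hb hc heq hac)
      set q' : ℤ := (3+3*k)*b*c - k*b - k*c - a with hq'def
      have hPq : q' * a = b^2 + c^2 + k*b*c := by
        rw [hq'def]; linear_combination -heq
      have hq'pos : 0 < q' := by
        nlinarith [hPq, mul_pos hb hc, sq_nonneg b, sq_nonneg c,
          mul_nonneg hk (mul_pos hb hc).le]
      have hSq : q' + a = (3+3*k)*b*c - k*b - k*c := by rw [hq'def]; ring
      have hq'le : q' ≤ max b c := flip_le k b c a q' hk hb hc hba hac hPq hSq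
      have hq'a : q' < a := lt_of_le_of_lt hq'le (max_lt hba hac)
      have hparent : IsGMTriple k b q' c :=
        ⟨hb, hq'pos, hc, by rw [hq'def]; linear_combination heq⟩
      obtain ⟨w', hw', huniq⟩ := ih b q' c hparent hq'le (by linarith)
      have hstep : gmDagStep k (b, q', c) true = (a, b, c) := by
        have h3 : (3+3*k)*b*c - q' - k*c - k*b = a := by rw [hq'def]; ring
        simp only [gmDagStep, h3]
      refine ⟨w' ++ [true], show MdagTree k (w' ++ [true]) = (a,b,c) by
        rw [mdag_concat, hw', hstep], ?_⟩
      intro v hv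
      rcases List.eq_nil_or_concat v with rfl | ⟨v', d, rfl⟩
      · exfalso
        simp only [MdagTree, List.foldl_nil, Prod.mk.injEq] at hv
        omega
      rw [List.concat_eq_append, mdag_concat] at hv
      have hinv := inv_mdag k hk v'
      rcases htv : MdagTree k v' with ⟨p, q, r⟩
      rw [htv] at hinv hv
      obtain ⟨⟨hp, hq, hr, hpe⟩, hpm⟩ := hinv
      have hN := N_big k p q r hk hp hq hr hpe hpm
      cases d
      · exfalso
        simp only [gmDagStep, Prod.mk.injEq] at hv
        obtain ⟨h1, h2, h3⟩ := hv
        have : p ≤ max p r := le_max_left p r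
        omega
      · simp only [gmDagStep, Prod.mk.injEq] at hv
        obtain ⟨h1, h2, h3⟩ := hv
        subst h2 h3
        have hqq : q = q' := by rw [hq'def]; linarith
        rw [hqq] at htv
        rw [List.concat_eq_append, huniq v' htv]

end GMaux

theorem stmt1 (k : ℤ) (hk : 0 ≤ k) :
    (∀ w : List Bool,
        IsGMTriple k (MdagTree k w).1 (MdagTree k w).2.1 (MdagTree k w).2.2 ∧
        (MdagTree k w).2.1 ≤ max (MdagTree k w).1 (MdagTree k w).2.2) ∧
    (∀ a b c : ℤ, IsGMTriple k a b c → b ≤ max a c →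
        ∃! w : List Bool, MdagTree k w = (a, b, c)) ∧
    Function.Injective (MdagTree k) := by
  refine ⟨fun w => GMaux.inv_mdag k hk w, ?_, ?_⟩
  · intro a b c h hm
    exact GMaux.key k hk (a + b + c).toNat a b c h hm (Int.self_le_toNat _)
  · intro w1 w2 hww
    obtain ⟨h, hm⟩ := GMaux.inv_mdag k hk w2
    obtain ⟨w, -, huniq⟩ := GMaux.key k hk
      ((MdagTree k w2).1 + (MdagTree k w2).2.1 + (MdagTree k w2).2.2).toNat
      (MdagTree k w2).1 (MdagTree k w2).2.1 (MdagTree k w2).2.2 h hm (Int.self_le_toNat _)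
    have e2 : w2 = w := huniq w2 rfl
    have e1 : w1 = w := huniq w1 (show MdagTree k w1 = _ by rw [hww])
    exact e1.trans e2.symm
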